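/- The Rédei rational functions satisfy the multiplicative property Q_{mn}(d,z) = Q_m(d, Q_n(d,z)) whenever all quantities are defined, where Q_n(d,z) = N_n(d,z)/D_n(d,z). In particular, Q_2(d, Q_n(d,z)) = Q_{2n}(d,z). -/

import Mathlib

/-- Rédei polynomial `N_n(d,x)` as a rational number. -/
def redeiN (d x : ℚ) (n : ℕ) : ℚ :=
  ∑ i ∈ Finset.range (n / 2 + 1), (n.choose (2 * i) : ℚ) * d ^ i * x ^ (n - 2 * i)

/-- Rédei polynomial `D_n(d,x)` as a rational number. -/
def redeiD (d x : ℚ) (n : ℕ) : ℚ :=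
  ∑ i ∈ Finset.range (n / 2 + 1), (n.choose (2 * i + 1) : ℚ) * d ^ i * x ^ (n - 2 * i - 1)

/-- Rédei rational function `Q_n(d,x)`. -/
def redeiQ (d x : ℚ) (n : ℕ) : ℚ := redeiN d x n / redeiD d x n

/-!
Work in `ℚ[ω] = QuadraticAlgebra ℚ d 0`, where `ω² = d`. The binomial theorem gives
`(x + ω)ⁿ = N_n(d,x) + D_n(d,x) ω`, so `N_n + D_n ω = D_n (Q_n + ω)` whenever `D_n ≠ 0`, and
`(z + ω)^{mn} = ((z + ω)ⁿ)^m = D_nᵐ (N_m(d, Q_n) + D_m(d, Q_n) ω)`.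
Comparing coordinates, `N_{mn}` and `D_{mn}` are `N_m(d, Q_n)` and `D_m(d, Q_n)` times the same
factor `D_nᵐ`, which cancels in the quotient.
-/

open Finset

theorem Finset.sum_range_two_mul {M : Type*} [AddCommMonoid M] (f : ℕ → M) (m : ℕ) :
    ∑ k ∈ range (2 * m), f k = ∑ i ∈ range m, (f (2 * i) + f (2 * i + 1)) := by
  induction m with
  | zero => simp
  | succ m ih => rw [Nat.mul_succ, sum_range_succ, sum_range_succ, sum_range_succ, ih, add_assoc]

theorem add_pow_eq_redeiN_add_redeiD_mul {A : Type*} [CommRing A] [Algebra ℚ A] (d x : ℚ)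
    {ω : A} (hω : ω ^ 2 = algebraMap ℚ A d) (n : ℕ) :
    (algebraMap ℚ A x + ω) ^ n =
      algebraMap ℚ A (redeiN d x n) + algebraMap ℚ A (redeiD d x n) * ω := by
  set f : ℕ → A := fun k ↦ ω ^ k * algebraMap ℚ A x ^ (n - k) * n.choose k
  -- pad the binomial sum with zero terms to an even length, then split by parity of `k`
  have hpad : ∑ k ∈ range (n + 1), f k = ∑ k ∈ range (2 * (n / 2 + 1)), f k :=
    sum_subset (range_subset_range.2 (by omega)) fun k _ hk ↦ by
      simp [f, Nat.choose_eq_zero_of_lt (show n < k by simpa using hk)]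
  rw [add_comm, add_pow, hpad, sum_range_two_mul, sum_add_distrib, redeiN, redeiD,
    map_sum, map_sum, sum_mul]
  congr 1 <;> refine sum_congr rfl fun i _ ↦ ?_
  · simp only [f, map_mul, map_pow, map_natCast, pow_mul, hω]
    ring
  · simp only [f, map_mul, map_pow, map_natCast, pow_succ, pow_mul, hω,
      show n - (2 * i + 1) = n - 2 * i - 1 by omega]
    ring

namespace QuadraticAlgebra

theorem mk_one_pow_eq_mk_redeiN_redeiD (d x : ℚ) (n : ℕ) :
    (⟨x, 1⟩ : QuadraticAlgebra ℚ d 0) ^ n = ⟨redeiN d x n, redeiD d x n⟩ := by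
  have hω : (⟨0, 1⟩ : QuadraticAlgebra ℚ d 0) ^ 2 = algebraMap ℚ _ d := by
    ext <;> simp [sq]
  have hx : (⟨x, 1⟩ : QuadraticAlgebra ℚ d 0) = algebraMap ℚ _ x + ⟨0, 1⟩ := by
    ext <;> simp [algebraMap_eq]
  rw [hx, add_pow_eq_redeiN_add_redeiD_mul d x hω n]
  ext <;> simp [algebraMap_eq]

theorem mk_redeiN_redeiD_eq_smul (d x : ℚ) {n : ℕ} (hD : redeiD d x n ≠ 0) :
    (⟨redeiN d x n, redeiD d x n⟩ : QuadraticAlgebra ℚ d 0) =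
      redeiD d x n • ⟨redeiQ d x n, 1⟩ := by
  ext <;> simp [redeiQ, mul_div_cancel₀ _ hD]

theorem mk_redeiN_redeiD_mul (d x : ℚ) (m : ℕ) {n : ℕ} (hD : redeiD d x n ≠ 0) :
    (⟨redeiN d x (m * n), redeiD d x (m * n)⟩ : QuadraticAlgebra ℚ d 0) =
      redeiD d x n ^ m • ⟨redeiN d (redeiQ d x n) m, redeiD d (redeiQ d x n) m⟩ := by
  rw [← mk_one_pow_eq_mk_redeiN_redeiD, mul_comm, pow_mul, mk_one_pow_eq_mk_redeiN_redeiD,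
    mk_redeiN_redeiD_eq_smul d x hD, smul_pow, mk_one_pow_eq_mk_redeiN_redeiD]

end QuadraticAlgebra

open QuadraticAlgebra in
theorem redeiQ_mul (d x : ℚ) (m : ℕ) {n : ℕ} (hD : redeiD d x n ≠ 0) :
    redeiQ d x (m * n) = redeiQ d (redeiQ d x n) m := by
  obtain ⟨hN, hD'⟩ := QuadraticAlgebra.ext_iff.1 (mk_redeiN_redeiD_mul d x m hD)
  simp only [re_smul, im_smul, smul_eq_mul] at hN hD'
  rw [redeiQ, redeiQ, hN, hD', mul_div_mul_left _ _ (pow_ne_zero m hD)]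

theorem redei_multiplicative_general (d : ℤ) (z : ℤ) (m n : ℕ)
    (hDn : redeiD (d : ℚ) (z : ℚ) n ≠ 0) :
    redeiQ (d : ℚ) (z : ℚ) (m * n) = redeiQ (d : ℚ) (redeiQ (d : ℚ) (z : ℚ) n) m ∧
    redeiQ (d : ℚ) (redeiQ (d : ℚ) (z : ℚ) n) 2 = redeiQ (d : ℚ) (z : ℚ) (2 * n) :=
  ⟨redeiQ_mul d z m hDn, (redeiQ_mul d z 2 hDn).symm⟩

theorem redei_multiplicative (d : ℤ) (z : ℤ) (hd : 0 < d) (hsq : ¬ IsSquare d) (m n : ℕ)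
    (hDn : redeiD (d : ℚ) (z : ℚ) n ≠ 0)
    (hDm : redeiD (d : ℚ) (redeiQ (d : ℚ) (z : ℚ) n) m ≠ 0)
    (hD2 : redeiD (d : ℚ) (redeiQ (d : ℚ) (z : ℚ) n) 2 ≠ 0) :
    redeiQ (d : ℚ) (z : ℚ) (m * n) = redeiQ (d : ℚ) (redeiQ (d : ℚ) (z : ℚ) n) m ∧
    redeiQ (d : ℚ) (redeiQ (d : ℚ) (z : ℚ) n) 2 = redeiQ (d : ℚ) (z : ℚ) (2 * n) :=
  redei_multiplicative_general d z m n hDn
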